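/- Fix pairwise distinct reals $z_1,\dots,z_{n+1}$. For $b\in\mathbb{R}^{n+1}$ define $G(b):=\sum_{1\le i<j\le n+1}\frac{b_i-b_j}{z_i-z_j}K_{ij}$ where $K_{ij}(x,p)=(x_ip_j-x_jp_i)^2$. Then for any $b,b'\in\mathbb{R}^{n+1}$, the functions $G(b)$ and $G(b')$ Poisson-commute under the canonical Poisson bracket on $\mathbb{R}^{2(n+1)}$. -/
import Mathlib

open MvPolynomial

/-- The canonical Poisson bracket on polynomial functions on `ℝ^{2m}` with
coordinates `x_a` (variables `Sum.inl a`) and `p_a` (variables `Sum.inr a`). -/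
noncomputable def poisson {m : ℕ} (F G : MvPolynomial (Fin m ⊕ Fin m) ℝ) :
    MvPolynomial (Fin m ⊕ Fin m) ℝ :=
  ∑ a : Fin m,
    (pderiv (Sum.inl a) F * pderiv (Sum.inr a) G -
      pderiv (Sum.inl a) G * pderiv (Sum.inr a) F)

/-- The quadratic function `K_{ij}(x,p) = (x_i p_j - x_j p_i)^2`. -/
noncomputable def Kp {m : ℕ} (i j : Fin m) : MvPolynomial (Fin m ⊕ Fin m) ℝ :=
  (X (Sum.inl i) * X (Sum.inr j) - X (Sum.inl j) * X (Sum.inr i)) ^ 2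

/-- The Gaudin element `G(b) = ∑_{i<j} ((b_i - b_j)/(z_i - z_j)) K_{ij}`. -/
noncomputable def Gaudin {m : ℕ} (z b : Fin m → ℝ) : MvPolynomial (Fin m ⊕ Fin m) ℝ :=
  ∑ q ∈ Finset.univ.filter (fun q : Fin m × Fin m => q.1 < q.2),
    C ((b q.1 - b q.2) / (z q.1 - z q.2)) * Kp q.1 q.2

/-- The angular momentum `L_{ij} = x_i p_j - x_j p_i`. -/
noncomputable def LL {m : ℕ} (i j : Fin m) : MvPolynomial (Fin m ⊕ Fin m) ℝ :=
  X (Sum.inl i) * X (Sum.inr j) - X (Sum.inl j) * X (Sum.inr i)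

/-- The coefficient `(b_i - b_j)/(z_i - z_j)`. -/
noncomputable def cb {m : ℕ} (z b : Fin m → ℝ) (i j : Fin m) : ℝ :=
  (b i - b j) / (z i - z j)

lemma cb_symm {m : ℕ} (z b : Fin m → ℝ) (i j : Fin m) : cb z b i j = cb z b j i := by
  unfold cb
  rw [← neg_div_neg_eq, neg_sub, neg_sub]

lemma cb_self {m : ℕ} (z b : Fin m → ℝ) (i : Fin m) : cb z b i i = 0 := by
  simp [cb]

lemma Kp_LL {m : ℕ} (i j : Fin m) : Kp i j = LL i j ^ 2 := rfl

lemma Kp_symm {m : ℕ} (i j : Fin m) : Kp i j = Kp j i := by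
  unfold Kp; ring

lemma Kp_self {m : ℕ} (i : Fin m) : Kp i i = 0 := by
  simp [Kp]

lemma poisson_add_left {m : ℕ} (F G H : MvPolynomial (Fin m ⊕ Fin m) ℝ) :
    poisson (F + G) H = poisson F H + poisson G H := by
  unfold poisson
  rw [← Finset.sum_add_distrib]
  refine Finset.sum_congr rfl fun a _ => ?_
  simp only [map_add]; ring

lemma poisson_add_right {m : ℕ} (F G H : MvPolynomial (Fin m ⊕ Fin m) ℝ) :
    poisson F (G + H) = poisson F G + poisson F H := by
  unfold poisson
  rw [← Finset.sum_add_distrib]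
  refine Finset.sum_congr rfl fun a _ => ?_
  simp only [map_add]; ring

lemma poisson_sum_left {m : ℕ} {ι : Type*} (s : Finset ι)
    (f : ι → MvPolynomial (Fin m ⊕ Fin m) ℝ) (G : MvPolynomial (Fin m ⊕ Fin m) ℝ) :
    poisson (∑ i ∈ s, f i) G = ∑ i ∈ s, poisson (f i) G := by
  unfold poisson
  rw [Finset.sum_comm]
  refine Finset.sum_congr rfl fun a _ => ?_
  rw [map_sum, map_sum, Finset.sum_mul, Finset.mul_sum, ← Finset.sum_sub_distrib]

lemma poisson_sum_right {m : ℕ} {ι : Type*} (s : Finset ι)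
    (f : ι → MvPolynomial (Fin m ⊕ Fin m) ℝ) (G : MvPolynomial (Fin m ⊕ Fin m) ℝ) :
    poisson G (∑ i ∈ s, f i) = ∑ i ∈ s, poisson G (f i) := by
  unfold poisson
  rw [Finset.sum_comm]
  refine Finset.sum_congr rfl fun a _ => ?_
  rw [map_sum, map_sum, Finset.mul_sum, Finset.sum_mul, ← Finset.sum_sub_distrib]

lemma poisson_C_mul_left {m : ℕ} (r : ℝ) (F G : MvPolynomial (Fin m ⊕ Fin m) ℝ) :
    poisson (C r * F) G = C r * poisson F G := by
  unfold poisson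
  rw [Finset.mul_sum]
  refine Finset.sum_congr rfl fun a _ => ?_
  rw [pderiv_C_mul, pderiv_C_mul]; ring

lemma poisson_C_mul_right {m : ℕ} (r : ℝ) (F G : MvPolynomial (Fin m ⊕ Fin m) ℝ) :
    poisson F (C r * G) = C r * poisson F G := by
  unfold poisson
  rw [Finset.mul_sum]
  refine Finset.sum_congr rfl fun a _ => ?_
  rw [pderiv_C_mul, pderiv_C_mul]; ring

lemma pois_sq {m : ℕ} (F G : MvPolynomial (Fin m ⊕ Fin m) ℝ) :
    poisson (F ^ 2) (G ^ 2) = 4 * F * G * poisson F G := by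
  unfold poisson
  rw [Finset.mul_sum]
  refine Finset.sum_congr rfl fun a _ => ?_
  simp only [sq, pderiv_mul]; ring

lemma pois_LL {m : ℕ} (i j k l : Fin m) :
    poisson (LL i j) (LL k l) =
      (if i = l then LL k j else 0) + (if i = k then LL j l else 0)
      + (if j = l then LL i k else 0) - (if j = k then LL i l else 0) := by
  unfold poisson LL
  simp only [map_sub, pderiv_mul, pderiv_X, Pi.single_apply, Sum.inl.injEq, Sum.inr.injEq,
    reduceCtorEq, if_false, mul_zero, zero_mul, add_zero, zero_add, mul_one, one_mul,
    ite_mul, mul_ite, sub_zero, zero_sub]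
  simp only [sub_mul, mul_sub, ite_mul, mul_ite, mul_zero, zero_mul,
    Finset.sum_sub_distrib, Finset.sum_add_distrib, Finset.sum_ite_eq, Finset.mem_univ,
    if_true]
  simp only [show (k = j) ↔ (j = k) from eq_comm, show (l = j) ↔ (j = l) from eq_comm,
    show (k = i) ↔ (i = k) from eq_comm, show (l = i) ↔ (i = l) from eq_comm]
  split_ifs <;> subst_vars <;> ring

lemma pois_KK {m : ℕ} (i j k l : Fin m) :
    poisson (Kp i j) (Kp k l) = 4 * LL i j * LL k l *
      ((if i = l then LL k j else 0) + (if i = k then LL j l else 0)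
      + (if j = l then LL i k else 0) - (if j = k then LL i l else 0)) := by
  rw [Kp_LL, Kp_LL, pois_sq, pois_LL]

lemma sum_pairs {M : Type*} [AddCommMonoid M] {m : ℕ} (f : Fin m → Fin m → M)
    (hsym : ∀ i j, f i j = f j i) (hdiag : ∀ i, f i i = 0) :
    ∑ q : Fin m × Fin m, f q.1 q.2 =
      (∑ q ∈ Finset.univ.filter (fun q : Fin m × Fin m => q.1 < q.2), f q.1 q.2)
      + ∑ q ∈ Finset.univ.filter (fun q : Fin m × Fin m => q.1 < q.2), f q.1 q.2 := by
  classical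
  rw [← Finset.sum_filter_add_sum_filter_not Finset.univ
      (fun q : Fin m × Fin m => q.1 < q.2) (fun q => f q.1 q.2)]
  congr 1
  rw [← Finset.sum_filter_add_sum_filter_not
      (Finset.univ.filter fun q : Fin m × Fin m => ¬ q.1 < q.2)
      (fun q => q.2 < q.1) (fun q => f q.1 q.2)]
  have h2 : ∑ q ∈ ((Finset.univ.filter fun q : Fin m × Fin m => ¬ q.1 < q.2).filter
      fun q => ¬ q.2 < q.1), f q.1 q.2 = 0 := by
    apply Finset.sum_eq_zero
    intro q hq
    simp only [Finset.mem_filter, Finset.mem_univ, true_and, not_lt] at hq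
    have : q.1 = q.2 := le_antisymm hq.2 hq.1
    rw [this, hdiag]
  rw [h2, add_zero]
  apply Finset.sum_nbij' (i := fun q => Prod.swap q) (j := fun q => Prod.swap q)
  · intro q hq
    simp only [Finset.mem_filter, Finset.mem_univ, true_and, not_lt] at hq ⊢
    exact hq.2
  · intro q hq
    simp only [Finset.mem_filter, Finset.mem_univ, true_and, not_lt] at hq ⊢
    exact ⟨le_of_lt hq, hq⟩
  · intro q _; exact Prod.swap_swap q
  · intro q _; exact Prod.swap_swap q
  · intro q _; exact hsym q.1 q.2

lemma Gaudin_double {m : ℕ} (z b : Fin m → ℝ) :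
    (∑ q : Fin m × Fin m, C (cb z b q.1 q.2) * Kp q.1 q.2)
      = Gaudin z b + Gaudin z b := by
  have h : Gaudin z b = ∑ q ∈ Finset.univ.filter (fun q : Fin m × Fin m => q.1 < q.2),
      C (cb z b q.1 q.2) * Kp q.1 q.2 := rfl
  rw [h]
  exact sum_pairs (fun i j => C (cb z b i j) * Kp i j)
    (fun i j => by show C (cb z b i j) * Kp i j = C (cb z b j i) * Kp j i; rw [cb_symm, Kp_symm])
    (fun i => by show C (cb z b i i) * Kp i i = 0; rw [Kp_self, mul_zero])

lemma Sc_zero {m : ℕ} (z : Fin m → ℝ) (hz : Function.Injective z) (b b' : Fin m → ℝ)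
    (s u v : Fin m) :
    cb z b s u * cb z b' s v - cb z b s v * cb z b' s u
      - cb z b u s * cb z b' u v + cb z b u v * cb z b' u s
      + cb z b v s * cb z b' v u - cb z b v u * cb z b' v s = 0 := by
  rcases eq_or_ne s u with rfl | hsu
  · simp only [cb_self, zero_mul, mul_zero]; ring
  rcases eq_or_ne s v with rfl | hsv
  · simp only [cb_self, zero_mul, mul_zero]; ring
  rcases eq_or_ne u v with rfl | huv
  · simp only [cb_self, zero_mul, mul_zero]; ring
  · have h1 : z s - z u ≠ 0 := sub_ne_zero.mpr fun h => hsu (hz h)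
    have h2 : z s - z v ≠ 0 := sub_ne_zero.mpr fun h => hsv (hz h)
    have h3 : z u - z v ≠ 0 := sub_ne_zero.mpr fun h => huv (hz h)
    have h4 : z u - z s ≠ 0 := fun h => h1 (by linarith [sub_eq_zero.mp h])
    have h5 : z v - z s ≠ 0 := fun h => h2 (by linarith [sub_eq_zero.mp h])
    have h6 : z v - z u ≠ 0 := fun h => h3 (by linarith [sub_eq_zero.mp h])
    unfold cb
    field_simp
    ring

noncomputable def chi {m : ℕ} (z b b' : Fin m → ℝ) (s u v : Fin m) :
    MvPolynomial (Fin m ⊕ Fin m) ℝ :=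
  4 * (C (cb z b s u) * C (cb z b' s v) * (LL s u * LL s v * LL u v))

lemma chi_point {m : ℕ} (z : Fin m → ℝ) (hz : Function.Injective z) (b b' : Fin m → ℝ)
    (s u v : Fin m) :
    chi z b b' s u v + chi z b b' s v u + chi z b b' u s v + chi z b b' u v s
      + chi z b b' v s u + chi z b b' v u s = 0 := by
  have hM : chi z b b' s u v + chi z b b' s v u + chi z b b' u s v + chi z b b' u v s
      + chi z b b' v s u + chi z b b' v u s
      = C (cb z b s u * cb z b' s v - cb z b s v * cb z b' s u
          - cb z b u s * cb z b' u v + cb z b u v * cb z b' u s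
          + cb z b v s * cb z b' v u - cb z b v u * cb z b' v s)
        * (4 * (LL s u * LL s v * LL u v)) := by
    simp only [chi, LL, map_sub, map_add, map_mul]
    ring
  rw [hM, Sc_zero z hz b b', map_zero, zero_mul]

lemma sum_chi_zero {m : ℕ} (z : Fin m → ℝ) (hz : Function.Injective z) (b b' : Fin m → ℝ) :
    ∑ s : Fin m, ∑ u : Fin m, ∑ v : Fin m, chi z b b' s u v = 0 := by
  set R := ∑ s : Fin m, ∑ u : Fin m, ∑ v : Fin m, chi z b b' s u v with hR
  have e1 : R = ∑ s : Fin m, ∑ u : Fin m, ∑ v : Fin m, chi z b b' s v u :=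
    Finset.sum_congr rfl fun s _ => Finset.sum_comm
  have e2 : R = ∑ s : Fin m, ∑ u : Fin m, ∑ v : Fin m, chi z b b' u s v :=
    Finset.sum_comm
  have e3 : R = ∑ s : Fin m, ∑ u : Fin m, ∑ v : Fin m, chi z b b' u v s := by
    rw [e1]; exact Finset.sum_comm
  have e4 : R = ∑ s : Fin m, ∑ u : Fin m, ∑ v : Fin m, chi z b b' v s u := by
    rw [e2]; exact Finset.sum_congr rfl fun s _ => Finset.sum_comm
  have e5 : R = ∑ s : Fin m, ∑ u : Fin m, ∑ v : Fin m, chi z b b' v u s := by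
    rw [e3]; exact Finset.sum_congr rfl fun s _ => Finset.sum_comm
  have big : R + R + R + R + R + R = 0 := by
    have hs : ∑ s : Fin m, ∑ u : Fin m, ∑ v : Fin m,
        (chi z b b' s u v + chi z b b' s v u + chi z b b' u s v + chi z b b' u v s
          + chi z b b' v s u + chi z b b' v u s) = 0 :=
      Finset.sum_eq_zero fun s _ => Finset.sum_eq_zero fun u _ => Finset.sum_eq_zero fun v _ =>
        chi_point z hz b b' s u v
    calc R + R + R + R + R + R
        = ∑ s : Fin m, ∑ u : Fin m, ∑ v : Fin m,
            (chi z b b' s u v + chi z b b' s v u + chi z b b' u s v + chi z b b' u v s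
              + chi z b b' v s u + chi z b b' v u s) := by
          simp only [Finset.sum_add_distrib]
          rw [← hR, ← e1, ← e2, ← e3, ← e4, ← e5]
      _ = 0 := hs
  have h6 : (6 : MvPolynomial (Fin m ⊕ Fin m) ℝ) * R = 0 := by linear_combination big
  rcases mul_eq_zero.mp h6 with h | h
  · exact absurd h (by norm_num)
  · exact h


lemma key {m : ℕ} (z : Fin m → ℝ) (hz : Function.Injective z) (b b' : Fin m → ℝ) :
    poisson (∑ q : Fin m × Fin m, C (cb z b q.1 q.2) * Kp q.1 q.2)
      (∑ r : Fin m × Fin m, C (cb z b' r.1 r.2) * Kp r.1 r.2) = 0 := by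
  have hQ1 : (∑ i : Fin m, ∑ j : Fin m, ∑ k : Fin m,
      C (cb z b i j) * C (cb z b' k i) * (4 * LL i j * LL k i * LL k j))
      = ∑ s : Fin m, ∑ u : Fin m, ∑ v : Fin m, chi z b b' s u v := by
    refine Finset.sum_congr rfl fun s _ => Finset.sum_congr rfl fun u _ =>
      Finset.sum_congr rfl fun v _ => ?_
    rw [cb_symm z b' v s]
    simp only [chi, LL]; ring
  have hQ2 : (∑ i : Fin m, ∑ j : Fin m, ∑ l : Fin m,
      C (cb z b i j) * C (cb z b' i l) * (4 * LL i j * LL i l * LL j l))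
      = ∑ s : Fin m, ∑ u : Fin m, ∑ v : Fin m, chi z b b' s u v := by
    refine Finset.sum_congr rfl fun s _ => Finset.sum_congr rfl fun u _ =>
      Finset.sum_congr rfl fun v _ => ?_
    simp only [chi, LL]; ring
  have hQ3 : (∑ i : Fin m, ∑ j : Fin m, ∑ k : Fin m,
      C (cb z b i j) * C (cb z b' k j) * (4 * LL i j * LL k j * LL i k))
      = ∑ s : Fin m, ∑ u : Fin m, ∑ v : Fin m, chi z b b' s u v := by
    rw [Finset.sum_comm]
    refine Finset.sum_congr rfl fun s _ => Finset.sum_congr rfl fun u _ =>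
      Finset.sum_congr rfl fun v _ => ?_
    rw [cb_symm z b u s, cb_symm z b' v s]
    simp only [chi, LL]; ring
  have hQ4 : (∑ i : Fin m, ∑ j : Fin m, ∑ l : Fin m,
      C (cb z b i j) * C (cb z b' j l) * (4 * LL i j * LL j l * LL i l))
      = ∑ s : Fin m, ∑ u : Fin m, ∑ v : Fin m, -chi z b b' s u v := by
    rw [Finset.sum_comm]
    refine Finset.sum_congr rfl fun s _ => Finset.sum_congr rfl fun u _ =>
      Finset.sum_congr rfl fun v _ => ?_
    rw [cb_symm z b u s]
    simp only [chi, LL]; ring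
  have step1 : poisson (∑ q : Fin m × Fin m, C (cb z b q.1 q.2) * Kp q.1 q.2)
      (∑ r : Fin m × Fin m, C (cb z b' r.1 r.2) * Kp r.1 r.2)
      = ∑ i : Fin m, ∑ j : Fin m, ∑ k : Fin m, ∑ l : Fin m,
        ((if i = l then C (cb z b i j) * C (cb z b' k l) * (4 * LL i j * LL k l * LL k j) else 0)
        + (if i = k then C (cb z b i j) * C (cb z b' k l) * (4 * LL i j * LL k l * LL j l) else 0)
        + (if j = l then C (cb z b i j) * C (cb z b' k l) * (4 * LL i j * LL k l * LL i k) else 0)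
        - (if j = k then C (cb z b i j) * C (cb z b' k l) * (4 * LL i j * LL k l * LL i l) else 0)) := by
    rw [poisson_sum_left, Fintype.sum_prod_type]
    refine Finset.sum_congr rfl fun i _ => Finset.sum_congr rfl fun j _ => ?_
    rw [poisson_C_mul_left, poisson_sum_right, Finset.mul_sum, Fintype.sum_prod_type]
    refine Finset.sum_congr rfl fun k _ => Finset.sum_congr rfl fun l _ => ?_
    rw [poisson_C_mul_right, pois_KK]
    split_ifs <;> ring
  have step2 : (∑ i : Fin m, ∑ j : Fin m, ∑ k : Fin m, ∑ l : Fin m,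
        ((if i = l then C (cb z b i j) * C (cb z b' k l) * (4 * LL i j * LL k l * LL k j) else 0)
        + (if i = k then C (cb z b i j) * C (cb z b' k l) * (4 * LL i j * LL k l * LL j l) else 0)
        + (if j = l then C (cb z b i j) * C (cb z b' k l) * (4 * LL i j * LL k l * LL i k) else 0)
        - (if j = k then C (cb z b i j) * C (cb z b' k l) * (4 * LL i j * LL k l * LL i l) else 0)))
      = (∑ i : Fin m, ∑ j : Fin m, ∑ k : Fin m,
          C (cb z b i j) * C (cb z b' k i) * (4 * LL i j * LL k i * LL k j))
      + (∑ i : Fin m, ∑ j : Fin m, ∑ l : Fin m,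
          C (cb z b i j) * C (cb z b' i l) * (4 * LL i j * LL i l * LL j l))
      + (∑ i : Fin m, ∑ j : Fin m, ∑ k : Fin m,
          C (cb z b i j) * C (cb z b' k j) * (4 * LL i j * LL k j * LL i k))
      - (∑ i : Fin m, ∑ j : Fin m, ∑ l : Fin m,
          C (cb z b i j) * C (cb z b' j l) * (4 * LL i j * LL j l * LL i l)) := by
    simp only [Finset.sum_add_distrib, Finset.sum_sub_distrib, Finset.sum_ite_eq,
      Finset.sum_ite_irrel, Finset.sum_const_zero, Finset.mem_univ, if_true]
  rw [step1, step2, hQ1, hQ2, hQ3, hQ4]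
  simp only [Finset.sum_neg_distrib]
  rw [sum_chi_zero z hz b b']
  ring

theorem stmt16 (n : ℕ) (z : Fin (n + 1) → ℝ) (hz : Function.Injective z)
    (b b' : Fin (n + 1) → ℝ) :
    poisson (Gaudin z b) (Gaudin z b') = 0 := by
  have hk := key z hz b b'
  rw [Gaudin_double z b, Gaudin_double z b', poisson_add_left, poisson_add_right] at hk
  have h4 : (4 : MvPolynomial (Fin (n + 1) ⊕ Fin (n + 1)) ℝ)
      * poisson (Gaudin z b) (Gaudin z b') = 0 := by linear_combination hk
  rcases mul_eq_zero.mp h4 with h | h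
  · exact absurd h (by norm_num)
  · exact h
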